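/- (BCD monotone convergence.) Assume the BCD setting of the nl_context with parameters τ, π, γ, λ, β > 0 and γ ≥ 1/β, and suppose the sequences {W_i^k}, {U_i^k}, {V_i^k} satisfy the same update conditions (1)–(4) as in the BCD descent property: U_h^{k+1} globally minimizes U ↦ (τ/2)‖U − W_h^k V_{h−1}^k‖² + (1/(2N))‖Y − (U)_hdmx‖²; W_i^{k+1} ∈ Prox_{βλ‖·‖_{2,0}}(W_i^{k+1} − β∇_W Φ(W_i^{k+1}; U_i^{k+1}, V_{i−1}^k)) with Φ(W; U, V) := (τ/2)‖U − WV‖² + (γ/2)‖W‖² for i ∈ [h]; V_i^{k+1} globally minimizes V ↦ (τ/2)‖U_{i+1}^{k+1} − W_{i+1}^{k+1}V‖² + (π/2)‖V − (U_i^k)_{0/1}‖² for i ∈ [h−1]; U_i^{k+1} globally minimizes U ↦ (τ/2)‖U − W_i^k V_{i−1}^k‖² + (π/2)‖V_i^{k+1} − (U)_{0/1}‖² for i ∈ [h−1]. Then the sequence { F(𝒲^k, 𝒰^k, 𝒱^k) }_{k≥0} is non-increasing and converges, and moreover W_i^{k+1} − W_i^k → 0 for every i ∈ [h] and V_i^{k+1}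 − V_i^k → 0 for every i ∈ [h−1] as k → ∞. -/

import Mathlib

set_option autoImplicit false

open Matrix Filter Topology

/-- Squared Frobenius norm of a matrix. -/
noncomputable def frobSq {m n : ℕ} (W : Matrix (Fin m) (Fin n) ℝ) : ℝ :=
  ∑ i, ∑ j, (W i j) ^ 2

/-- `‖W‖_{2,0}`: the number of nonzero columns of `W`, as a real number. -/
noncomputable def norm20 {m n : ℕ} (W : Matrix (Fin m) (Fin n) ℝ) : ℝ :=
  ((open Classical in Finset.univ.filter fun j : Fin n => Wᵀ j ≠ 0).card : ℝ)

/-- The proximal operator (as a set of global minimizers):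
`Prox_β G (H) = argmin_W { G(W) + (1/(2β))‖W − H‖² }`. -/
def ProxSet {m n : ℕ} (β : ℝ) (G : Matrix (Fin m) (Fin n) ℝ → ℝ)
    (H : Matrix (Fin m) (Fin n) ℝ) : Set (Matrix (Fin m) (Fin n) ℝ) :=
  {W | ∀ Z : Matrix (Fin m) (Fin n) ℝ,
    G W + (1 / (2 * β)) * frobSq (W - H) ≤ G Z + (1 / (2 * β)) * frobSq (Z - H)}

/-- The step (0/1) function applied entrywise to a matrix. -/
noncomputable def stepM {a b : ℕ} (A : Matrix (Fin a) (Fin b) ℝ) :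
    Matrix (Fin a) (Fin b) ℝ :=
  Matrix.of fun i j => if 0 < A i j then (1 : ℝ) else 0

/-- The hardmax of a matrix, applied columnwise: entry `(i,j)` is `1` if `A i j` is
the maximum of column `j`, and `0` otherwise. -/
noncomputable def hdmxM {a b : ℕ} (A : Matrix (Fin a) (Fin b) ℝ) :
    Matrix (Fin a) (Fin b) ℝ :=
  Matrix.of fun i j => if ∀ r, A r j ≤ A i j then (1 : ℝ) else 0

/-!
Summing the four block updates gives the sufficient decrease
`F(k+1) + (π/4) ∑ᵢ ‖V_i^{k+1} - V_i^k‖² ≤ F(k)`: the `U`-updates are exact minimizations, the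
`W`-update is a proximal step on `λ‖·‖_{2,0} + Φ` which decreases it as soon as `γ ≥ 1/β`, and the
`V`-update minimizes a `π`-strongly convex quadratic, which is compared with its value at the
midpoint of the old and new iterate. Since `F ≥ 0`, it converges, and `ΔV → 0`.

For the weights, note that the hardmax, the step function and `‖·‖_{2,0}` are invariant under
positive scaling, so every update is optimal along its own ray through the origin. This gives
`‖U_i^{k+1}‖ ≤ ‖W_i^k V_{i-1}^k‖` and `γ‖W‖² + τ‖WV‖² = τ⟪WV, U⟫` for
`(W, V, U) = (W_i^{k+1}, V_{i-1}^k, U_i^{k+1})`. As the `V_{i-1}^k` are bounded by some `C`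
(because `F` is), the layer outputs `‖W_i^k V_{i-1}^k‖` contract by the factor
`τC²/(γ + τC²) < 1` up to an error of order `‖ΔV‖ → 0`. Hence they tend to `0`, so does
`W_i^k`, and in particular `ΔW → 0`.
-/

open scoped RealInnerProductSpace

theorem sum_Icc_one_eq_sum_add {M : Type*} [AddCommMonoid M] {h : ℕ} (hh : 1 ≤ h)
    (f : ℕ → M) : ∑ i ∈ Finset.Icc 1 h, f i = ∑ i ∈ Finset.Icc 1 (h - 1), f i + f h := by
  obtain ⟨n, rfl⟩ := Nat.exists_eq_add_of_le' hh
  simp [Finset.sum_Icc_succ_top]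

theorem sum_Icc_one_eq_add_sum_Icc_two {M : Type*} [AddCommMonoid M] {h : ℕ} (hh : 1 ≤ h)
    (f : ℕ → M) : ∑ i ∈ Finset.Icc 1 h, f i = f 1 + ∑ i ∈ Finset.Icc 2 h, f i := by
  rw [← Finset.add_sum_Ioc_eq_sum_Icc hh, ← Finset.Icc_add_one_left_eq_Ioc]
  rfl

theorem sum_Icc_one_sub_one_eq {M : Type*} [AddCommMonoid M] (h : ℕ) (f : ℕ → M) :
    ∑ i ∈ Finset.Icc 1 (h - 1), f i = ∑ i ∈ Finset.Icc 2 h, f (i - 1) := by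
  refine Finset.sum_nbij' (· + 1) (· - 1) ?_ ?_ ?_ ?_ fun i _ => rfl <;>
    intro i hi <;> simp only [Finset.mem_Icc] at hi ⊢ <;> omega

theorem tendsto_of_forall_add_mul_le {f g : ℕ → ℝ} {c : ℝ} (hc : 0 < c) (hf : ∀ k, 0 ≤ f k)
    (hg : ∀ k, 0 ≤ g k) (h : ∀ k, f (k + 1) + c * g k ≤ f k) :
    (∃ a, Tendsto f atTop (𝓝 a)) ∧ Tendsto g atTop (𝓝 0) := by
  have hanti : Antitone f :=
    antitone_nat_of_succ_le fun k => by nlinarith [h k, hg k]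
  have hconv := tendsto_atTop_ciInf hanti ⟨0, by rintro _ ⟨k, rfl⟩; exact hf k⟩
  refine ⟨⟨_, hconv⟩, squeeze_zero hg (fun k => ?_) (g := fun k => (f k - f (k + 1)) / c) ?_⟩
  · rw [le_div_iff₀ hc]
    linarith [h k]
  · simpa using (hconv.sub (hconv.comp (tendsto_add_atTop_nat 1))).div_const c

theorem eq_zero_of_forall_nonneg_mul_add_mul_sq {p q : ℝ}
    (H : ∀ t : ℝ, -1 < t → 0 ≤ p * t + q * t ^ 2) : p = 0 := by
  by_contra hp
  set ε := 1 / (|p| + |q| + 1) with hε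
  have hε0 : 0 < ε := by positivity
  have hpε : |p| * ε < 1 := by
    rw [hε, mul_one_div, div_lt_one (by positivity)]; linarith [abs_nonneg q]
  have hqε : |q| * ε < 1 := by
    rw [hε, mul_one_div, div_lt_one (by positivity)]; linarith [abs_nonneg p]
  have key := H (-p * ε) (by nlinarith [le_abs_self p])
  have : 0 < p ^ 2 * ε * (1 - q * ε) := by
    have : 0 < 1 - q * ε := by nlinarith [le_abs_self q]
    positivity
  nlinarith

theorem mul_le_of_mul_sq_le {x p q : ℝ} (hx : 0 ≤ x) (hq : 0 ≤ q) (h : p * x ^ 2 ≤ q * x) :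
    p * x ≤ q := by
  rcases hx.eq_or_lt with rfl | hx
  · simpa using hq
  · rw [sq, ← mul_assoc] at h
    exact le_of_mul_le_mul_right h hx

section InnerProductSpace

variable {E : Type*} [NormedAddCommGroup E] [InnerProductSpace ℝ E]

theorem norm_le_of_forall_norm_sub_sq_le_smul {x p : E}
    (h : ∀ s : ℝ, 0 < s → ‖x - p‖ ^ 2 ≤ ‖s • x - p‖ ^ 2) : ‖x‖ ≤ ‖p‖ := by
  have hx : ⟪x - p, x⟫ = 0 := by
    have := eq_zero_of_forall_nonneg_mul_add_mul_sq (p := 2 * ⟪x - p, x⟫) (q := ‖x‖ ^ 2)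
      fun t ht => by
        have := h (1 + t) (by linarith)
        rw [show (1 + t) • x - p = (x - p) + t • x by module, norm_add_sq_real,
          real_inner_smul_right, norm_smul, mul_pow, Real.norm_eq_abs, sq_abs] at this
        linarith
    linarith
  rw [inner_sub_left, real_inner_self_eq_norm_sq, real_inner_comm] at hx
  nlinarith [real_inner_le_norm x p, norm_nonneg x, norm_nonneg p]

theorem norm_half_smul_add_sq (x y : E) :
    ‖(1 / 2 : ℝ) • (x + y)‖ ^ 2 = ‖x‖ ^ 2 / 2 + ‖y‖ ^ 2 / 2 - ‖x - y‖ ^ 2 / 4 := by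
  rw [norm_smul, mul_pow, Real.norm_of_nonneg (by norm_num)]
  linarith [parallelogram_law_with_norm ℝ x y]

end InnerProductSpace

section Frobenius

attribute [local instance] Matrix.frobeniusNormedAddCommGroup Matrix.frobeniusNormedSpace

namespace Matrix

variable {l m n : Type*} [Fintype l] [Fintype m] [Fintype n]

theorem frobenius_norm_sq (A : Matrix m n ℝ) : ‖A‖ ^ 2 = ∑ i, ∑ j, A i j ^ 2 := by
  rw [frobenius_norm_def, ← Real.sqrt_eq_rpow, Real.sq_sqrt (by positivity)]
  simp

@[reducible]
noncomputable def frobeniusInnerProductSpace : InnerProductSpace ℝ (Matrix m n ℝ) where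
  inner A B := ∑ i, ∑ j, A i j * B i j
  norm_sq_eq_re_inner A := by rw [frobenius_norm_sq]; simp [sq]
  conj_inner_symm A B := by simp [mul_comm]
  add_left A B C := by simp [add_mul, Finset.sum_add_distrib]
  smul_left A B r := by simp [Finset.mul_sum, mul_assoc]

attribute [local instance] frobeniusInnerProductSpace

theorem frobenius_inner_def (A B : Matrix m n ℝ) : ⟪A, B⟫ = ∑ i, ∑ j, A i j * B i j := rfl

theorem frobenius_inner_mul_transpose (X : Matrix l m ℝ) (R : Matrix l n ℝ)
    (V : Matrix m n ℝ) : ⟪X, R * Vᵀ⟫ = ⟪X * V, R⟫ := by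
  simp only [frobenius_inner_def, mul_apply, transpose_apply, Finset.mul_sum, Finset.sum_mul]
  refine Finset.sum_congr rfl fun i _ => ?_
  rw [Finset.sum_comm]
  exact Finset.sum_congr rfl fun j _ => Finset.sum_congr rfl fun k _ => by ring

end Matrix

attribute [local instance] Matrix.frobeniusInnerProductSpace

section

variable {a b : ℕ}

theorem frobSq_eq_norm_sq (A : Matrix (Fin a) (Fin b) ℝ) : frobSq A = ‖A‖ ^ 2 :=
  (Matrix.frobenius_norm_sq A).symm

theorem norm20_nonneg (A : Matrix (Fin a) (Fin b) ℝ) : 0 ≤ norm20 A := by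
  unfold norm20; positivity

theorem norm20_smul {s : ℝ} (hs : s ≠ 0) (A : Matrix (Fin a) (Fin b) ℝ) :
    norm20 (s • A) = norm20 A := by
  have (j : Fin b) : (s • A)ᵀ j = s • Aᵀ j := rfl
  unfold norm20
  congr 2
  classical
  exact Finset.filter_congr fun j _ => by simp [this, hs]

theorem stepM_smul {s : ℝ} (hs : 0 < s) (A : Matrix (Fin a) (Fin b) ℝ) :
    stepM (s • A) = stepM A := by
  ext i j
  simp [stepM, mul_pos_iff_of_pos_left hs]

theorem hdmxM_smul {s : ℝ} (hs : 0 < s) (A : Matrix (Fin a) (Fin b) ℝ) :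
    hdmxM (s • A) = hdmxM A := by
  ext i j
  simp [hdmxM, mul_le_mul_iff_right₀ hs]

theorem norm_stepM_sq_le (A : Matrix (Fin a) (Fin b) ℝ) : ‖stepM A‖ ^ 2 ≤ a * b := by
  rw [← frobSq_eq_norm_sq, frobSq]
  calc ∑ i, ∑ j, stepM A i j ^ 2 ≤ ∑ _ : Fin a, ∑ _ : Fin b, (1 : ℝ) := by
        gcongr with i _ j _
        rw [stepM, Matrix.of_apply]
        split_ifs <;> norm_num
    _ = a * b := by simp

end

section Prox

variable {a b : ℕ} {G : Matrix (Fin a) (Fin b) ℝ → ℝ} {β : ℝ} {W g : Matrix (Fin a) (Fin b) ℝ}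

theorem le_of_mem_proxSet_sub_smul (hβ : 0 < β) (hW : W ∈ ProxSet β G (W - β • g))
    (Z : Matrix (Fin a) (Fin b) ℝ) :
    G W ≤ G Z + ⟪g, Z - W⟫ + 1 / (2 * β) * ‖Z - W‖ ^ 2 := by
  have h := hW Z
  rw [frobSq_eq_norm_sq, frobSq_eq_norm_sq, sub_sub_cancel,
    show Z - (W - β • g) = (Z - W) + β • g by abel, norm_add_sq_real,
    real_inner_smul_right, real_inner_comm] at h
  have : 1 / (2 * β) * (2 * (β * ⟪g, Z - W⟫)) = ⟪g, Z - W⟫ := by field_simp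
  rw [mul_add, mul_add, this] at h
  linarith

theorem inner_eq_zero_of_mem_proxSet_sub_smul (hβ : 0 < β)
    (hG : ∀ s : ℝ, 0 < s → G (s • W) = G W) (hW : W ∈ ProxSet β G (W - β • g)) :
    ⟪g, W⟫ = 0 := by
  refine eq_zero_of_forall_nonneg_mul_add_mul_sq (q := 1 / (2 * β) * ‖W‖ ^ 2) fun t ht => ?_
  have h := le_of_mem_proxSet_sub_smul hβ hW ((1 + t) • W)
  rw [hG _ (by linarith), show (1 + t) • W - W = t • W by module, real_inner_smul_right,
    norm_smul, mul_pow, Real.norm_eq_abs, sq_abs] at h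
  linear_combination h

end Prox

section Phi

variable {l m n : Type*} [Fintype l] [Fintype m] [Fintype n]

/-- The paper's `Φ(W; U, V)`; `bcdPhiGrad` is its gradient in `W`. -/
noncomputable def bcdPhi (τ γ : ℝ) (U : Matrix l n ℝ) (V : Matrix m n ℝ) (W : Matrix l m ℝ) :
    ℝ :=
  τ / 2 * ‖U - W * V‖ ^ 2 + γ / 2 * ‖W‖ ^ 2

def bcdPhiGrad (τ γ : ℝ) (U : Matrix l n ℝ) (V : Matrix m n ℝ) (W : Matrix l m ℝ) :
    Matrix l m ℝ :=
  τ • ((W * V - U) * Vᵀ) + γ • W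

theorem bcdPhi_eq_add_inner_grad (τ γ : ℝ) (U : Matrix l n ℝ) (V : Matrix m n ℝ)
    (W Z : Matrix l m ℝ) :
    bcdPhi τ γ U V Z = bcdPhi τ γ U V W + ⟪bcdPhiGrad τ γ U V W, Z - W⟫
      + τ / 2 * ‖(Z - W) * V‖ ^ 2 + γ / 2 * ‖Z - W‖ ^ 2 := by
  have hU : U - Z * V = (U - W * V) - (Z - W) * V := by rw [Matrix.sub_mul]; abel
  have hZ : ‖Z‖ ^ 2 = ‖W‖ ^ 2 + 2 * ⟪W, Z - W⟫ + ‖Z - W‖ ^ 2 := by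
    rw [← norm_add_sq_real, add_sub_cancel]
  have hgrad : ⟪(W * V - U) * Vᵀ, Z - W⟫ = -⟪U - W * V, (Z - W) * V⟫ := by
    rw [real_inner_comm, Matrix.frobenius_inner_mul_transpose, ← neg_sub U (W * V),
      inner_neg_right, real_inner_comm]
  rw [bcdPhi, bcdPhi, bcdPhiGrad, hU, norm_sub_sq_real, inner_add_left, real_inner_smul_left,
    real_inner_smul_left, hgrad, hZ]
  ring

end Phi

section WeightUpdate

variable {a b c : ℕ} {τ γ β : ℝ} {G : Matrix (Fin a) (Fin b) ℝ → ℝ}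
  {U : Matrix (Fin a) (Fin c) ℝ} {V : Matrix (Fin b) (Fin c) ℝ} {W : Matrix (Fin a) (Fin b) ℝ}

theorem add_bcdPhi_le_of_mem_proxSet (hτ : 0 ≤ τ) (hβ : 0 < β) (hγβ : 1 / β ≤ γ)
    (hW : W ∈ ProxSet β G (W - β • bcdPhiGrad τ γ U V W)) (Z : Matrix (Fin a) (Fin b) ℝ) :
    G W + bcdPhi τ γ U V W ≤ G Z + bcdPhi τ γ U V Z := by
  have hprox := le_of_mem_proxSet_sub_smul hβ hW Z
  have hZ := bcdPhi_eq_add_inner_grad τ γ U V W Z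
  have hβγ : 1 / (2 * β) * ‖Z - W‖ ^ 2 ≤ γ / 2 * ‖Z - W‖ ^ 2 := by
    refine mul_le_mul_of_nonneg_right ?_ (sq_nonneg _)
    rw [div_le_div_iff₀ (by positivity) two_pos]
    linarith [(div_le_iff₀ hβ).1 hγβ]
  have : 0 ≤ τ / 2 * ‖(Z - W) * V‖ ^ 2 := by positivity
  linarith

theorem norm_sq_add_norm_mul_sq_eq_inner_of_mem_proxSet (hβ : 0 < β)
    (hG : ∀ s : ℝ, 0 < s → G (s • W) = G W)
    (hW : W ∈ ProxSet β G (W - β • bcdPhiGrad τ γ U V W)) :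
    γ * ‖W‖ ^ 2 + τ * ‖W * V‖ ^ 2 = τ * ⟪W * V, U⟫ := by
  have h := inner_eq_zero_of_mem_proxSet_sub_smul hβ hG hW
  rw [bcdPhiGrad, inner_add_left, real_inner_smul_left, real_inner_smul_left,
    real_inner_self_eq_norm_sq, real_inner_comm, Matrix.frobenius_inner_mul_transpose,
    inner_sub_right, real_inner_self_eq_norm_sq] at h
  linarith

end WeightUpdate

section ActUpdate

variable {l m n : Type*} [Fintype l] [Fintype m] [Fintype n] {τ π : ℝ}
  {U : Matrix l n ℝ} {W : Matrix l m ℝ} {V' B : Matrix m n ℝ}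

/-- Comparing `V'` with the midpoint of `V'` and `V`, the parallelogram law produces the
`π / 4` term. -/
theorem add_norm_sub_sq_le_of_forall_le (hτ : 0 ≤ τ)
    (hmin : ∀ Z, τ / 2 * ‖U - W * V'‖ ^ 2 + π / 2 * ‖V' - B‖ ^ 2 ≤
      τ / 2 * ‖U - W * Z‖ ^ 2 + π / 2 * ‖Z - B‖ ^ 2) (V : Matrix m n ℝ) :
    τ / 2 * ‖U - W * V'‖ ^ 2 + π / 2 * ‖V' - B‖ ^ 2 + π / 4 * ‖V' - V‖ ^ 2 ≤
      τ / 2 * ‖U - W * V‖ ^ 2 + π / 2 * ‖V - B‖ ^ 2 := by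
  have h := hmin ((1 / 2 : ℝ) • (V' + V))
  rw [show U - W * ((1 / 2 : ℝ) • (V' + V)) = (1 / 2 : ℝ) • ((U - W * V') + (U - W * V)) by
      rw [Matrix.mul_smul, Matrix.mul_add]; module,
    show (1 / 2 : ℝ) • (V' + V) - B = (1 / 2 : ℝ) • ((V' - B) + (V - B)) by module,
    norm_half_smul_add_sq, norm_half_smul_add_sq,
    show (U - W * V') - (U - W * V) = W * (V - V') by rw [Matrix.mul_sub]; abel,
    show (V' - B) - (V - B) = V' - V by abel] at h
  have : 0 ≤ τ * ‖W * (V - V')‖ ^ 2 := by positivity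
  linarith

end ActUpdate

section Contraction

variable {l m n : Type*} [Fintype l] [Fintype m] [Fintype n] {τ γ C : ℝ}

theorem norm_le_of_norm_sq_add_norm_mul_sq_eq_inner {U : Matrix l n ℝ} {V : Matrix m n ℝ}
    {W : Matrix l m ℝ} (hγ : 0 < γ) (hτ : 0 ≤ τ) (hV : ‖V‖ ≤ C)
    (h : γ * ‖W‖ ^ 2 + τ * ‖W * V‖ ^ 2 = τ * ⟪W * V, U⟫) :
    γ * ‖W‖ ≤ τ * C * ‖U‖ ∧ (γ + τ * C ^ 2) * ‖W * V‖ ≤ τ * C ^ 2 * ‖U‖ := by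
  have hC : 0 ≤ C := (norm_nonneg V).trans hV
  have hWV : ‖W * V‖ ≤ ‖W‖ * C :=
    (Matrix.frobenius_norm_mul W V).trans (mul_le_mul_of_nonneg_left hV (norm_nonneg W))
  have hin : τ * ⟪W * V, U⟫ ≤ τ * (‖W * V‖ * ‖U‖) :=
    mul_le_mul_of_nonneg_left (real_inner_le_norm _ _) hτ
  have hτU : 0 ≤ τ * ‖U‖ := mul_nonneg hτ (norm_nonneg U)
  constructor
  · have key : γ * ‖W‖ ^ 2 ≤ τ * C * ‖U‖ * ‖W‖ := by
      nlinarith [mul_le_mul_of_nonneg_right hWV hτU, mul_nonneg hτ (sq_nonneg ‖W * V‖)]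
    exact mul_le_of_mul_sq_le (norm_nonneg W) (by positivity) key
  · have key : (γ + τ * C ^ 2) * ‖W * V‖ ^ 2 ≤ τ * C ^ 2 * ‖U‖ * ‖W * V‖ := by
      nlinarith [mul_le_mul_of_nonneg_left (pow_le_pow_left₀ (norm_nonneg _) hWV 2) hγ.le,
        mul_le_mul_of_nonneg_left hin (sq_nonneg C)]
    exact mul_le_of_mul_sq_le (norm_nonneg _) (by positivity) key

theorem tendsto_zero_of_norm_sq_add_norm_mul_sq_eq_inner {W : ℕ → Matrix l m ℝ}
    {V : ℕ → Matrix m n ℝ} {U : ℕ → Matrix l n ℝ} (hγ : 0 < γ) (hτ : 0 ≤ τ)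
    (hV : ∀ k, ‖V k‖ ≤ C) (hΔV : Tendsto (fun k => V (k + 1) - V k) atTop (𝓝 0))
    (hU : ∀ k, ‖U (k + 1)‖ ≤ ‖W k * V k‖)
    (hW : ∀ k, γ * ‖W (k + 1)‖ ^ 2 + τ * ‖W (k + 1) * V k‖ ^ 2 =
      τ * ⟪W (k + 1) * V k, U (k + 1)⟫) :
    Tendsto W atTop (𝓝 0) := by
  have hC : 0 ≤ C := (norm_nonneg _).trans (hV 0)
  have hden : 0 < γ + τ * C ^ 2 := by positivity
  set q := τ * C ^ 2 / (γ + τ * C ^ 2)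
  have hq : q < 1 := by rw [div_lt_one hden]; linarith
  set r := τ * C / γ
  have hbound k := norm_le_of_norm_sq_add_norm_mul_sq_eq_inner hγ hτ (hV k) (hW k)
  have hWU k : ‖W (k + 1)‖ ≤ r * ‖W k * V k‖ := by
    rw [div_mul_eq_mul_div, le_div_iff₀ hγ, mul_comm]
    exact (hbound k).1.trans (mul_le_mul_of_nonneg_left (hU k) (by positivity))
  have hrec k : ‖W (k + 1) * V (k + 1)‖ ≤ (q + r * ‖V (k + 1) - V k‖) * ‖W k * V k‖ := by
    have hq' : ‖W (k + 1) * V k‖ ≤ q * ‖W k * V k‖ := by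
      rw [div_mul_eq_mul_div, le_div_iff₀ hden, mul_comm]
      exact (hbound k).2.trans (mul_le_mul_of_nonneg_left (hU k) (by positivity))
    calc ‖W (k + 1) * V (k + 1)‖
        = ‖W (k + 1) * V k + W (k + 1) * (V (k + 1) - V k)‖ := by
          rw [Matrix.mul_sub]; abel_nf
      _ ≤ ‖W (k + 1) * V k‖ + ‖W (k + 1)‖ * ‖V (k + 1) - V k‖ :=
        (norm_add_le _ _).trans (add_le_add_right (Matrix.frobenius_norm_mul _ _) _)
      _ ≤ q * ‖W k * V k‖ + r * ‖W k * V k‖ * ‖V (k + 1) - V k‖ := by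
        gcongr
        exact hWU k
      _ = (q + r * ‖V (k + 1) - V k‖) * ‖W k * V k‖ := by ring
  have hr : ∀ᶠ k in atTop, q + r * ‖V (k + 1) - V k‖ < (1 + q) / 2 := by
    have : Tendsto (fun k => q + r * ‖V (k + 1) - V k‖) atTop (𝓝 q) := by
      simpa using (hΔV.norm.const_mul r).const_add q
    exact this.eventually (gt_mem_nhds (by linarith))
  have ha : Tendsto (fun k => ‖W k * V k‖) atTop (𝓝 0) := by
    refine (summable_of_ratio_norm_eventually_le (r := (1 + q) / 2) (by linarith) ?_)
      |>.tendsto_atTop_zero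
    filter_upwards [hr] with k hk
    simp only [norm_norm]
    exact (hrec k).trans (mul_le_mul_of_nonneg_right hk.le (norm_nonneg _))
  refine (tendsto_add_atTop_iff_nat 1).1 (squeeze_zero_norm hWU ?_)
  simpa using ha.const_mul r

end Contraction

section BCD

variable {h N : ℕ} {d : ℕ → ℕ} {Y : Matrix (Fin (d h)) (Fin N) ℝ} {τ π γ lam β : ℝ}
  {W W' : (i : ℕ) → Matrix (Fin (d i)) (Fin (d (i - 1))) ℝ}
  {U V U' V' : (i : ℕ) → Matrix (Fin (d i)) (Fin N) ℝ}

noncomputable def bcdObjective (Y : Matrix (Fin (d h)) (Fin N) ℝ) (τ π γ lam : ℝ)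
    (W : (i : ℕ) → Matrix (Fin (d i)) (Fin (d (i - 1))) ℝ)
    (U V : (i : ℕ) → Matrix (Fin (d i)) (Fin N) ℝ) : ℝ :=
  (1 / (2 * (N : ℝ))) * frobSq (Y - hdmxM (U h)) +
    (∑ i ∈ Finset.Icc 1 h, (lam * norm20 (W i) + (γ / 2) * frobSq (W i))) +
    (τ / 2) * (∑ i ∈ Finset.Icc 1 h, frobSq (U i - W i * V (i - 1))) +
    (π / 2) * (∑ i ∈ Finset.Icc 1 (h - 1), frobSq (V i - stepM (U i)))

/-- `act_min` is indexed by the layer `i` whose input `V' (i - 1)` it determines. -/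
structure IsBCDStep (Y : Matrix (Fin (d h)) (Fin N) ℝ) (τ π γ lam β : ℝ)
    (W : (i : ℕ) → Matrix (Fin (d i)) (Fin (d (i - 1))) ℝ)
    (U V : (i : ℕ) → Matrix (Fin (d i)) (Fin N) ℝ)
    (W' : (i : ℕ) → Matrix (Fin (d i)) (Fin (d (i - 1))) ℝ)
    (U' V' : (i : ℕ) → Matrix (Fin (d i)) (Fin N) ℝ) : Prop where
  top_min : ∀ Z : Matrix (Fin (d h)) (Fin N) ℝ,
    (τ / 2) * frobSq (U' h - W h * V (h - 1)) +
        (1 / (2 * (N : ℝ))) * frobSq (Y - hdmxM (U' h)) ≤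
      (τ / 2) * frobSq (Z - W h * V (h - 1)) + (1 / (2 * (N : ℝ))) * frobSq (Y - hdmxM Z)
  weight_prox : ∀ i ∈ Finset.Icc 1 h,
    W' i ∈ ProxSet β (fun Z => lam * norm20 Z)
      (W' i - β • bcdPhiGrad τ γ (U' i) (V (i - 1)) (W' i))
  act_min : ∀ i ∈ Finset.Icc 2 h, ∀ Z : Matrix (Fin (d (i - 1))) (Fin N) ℝ,
    (τ / 2) * frobSq (U' i - W' i * V' (i - 1)) +
        (π / 2) * frobSq (V' (i - 1) - stepM (U (i - 1))) ≤
      (τ / 2) * frobSq (U' i - W' i * Z) + (π / 2) * frobSq (Z - stepM (U (i - 1)))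
  preact_min : ∀ i ∈ Finset.Icc 1 (h - 1), ∀ Z : Matrix (Fin (d i)) (Fin N) ℝ,
    (τ / 2) * frobSq (U' i - W i * V (i - 1)) + (π / 2) * frobSq (V' i - stepM (U' i)) ≤
      (τ / 2) * frobSq (Z - W i * V (i - 1)) + (π / 2) * frobSq (V' i - stepM Z)

namespace IsBCDStep

theorem norm_preact_le (hs : IsBCDStep Y τ π γ lam β W U V W' U' V') (hτ : 0 < τ) {i : ℕ}
    (hi : i ∈ Finset.Icc 1 h) : ‖U' i‖ ≤ ‖W i * V (i - 1)‖ := by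
  refine norm_le_of_forall_norm_sub_sq_le_smul fun s hs0 => ?_
  obtain ⟨hi1, hih⟩ := Finset.mem_Icc.1 hi
  rcases hih.eq_or_lt with rfl | hih
  · have h := hs.top_min (s • U' i)
    simp only [hdmxM_smul hs0, frobSq_eq_norm_sq] at h
    exact le_of_mul_le_mul_left (by linarith) (half_pos hτ)
  · have h := hs.preact_min i (Finset.mem_Icc.2 ⟨hi1, by omega⟩) (s • U' i)
    simp only [stepM_smul hs0, frobSq_eq_norm_sq] at h
    exact le_of_mul_le_mul_left (by linarith) (half_pos hτ)

theorem norm_sq_add_norm_mul_sq_eq_inner (hs : IsBCDStep Y τ π γ lam β W U V W' U' V')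
    (hβ : 0 < β) {i : ℕ} (hi : i ∈ Finset.Icc 1 h) :
    γ * ‖W' i‖ ^ 2 + τ * ‖W' i * V (i - 1)‖ ^ 2 = τ * ⟪W' i * V (i - 1), U' i⟫ :=
  norm_sq_add_norm_mul_sq_eq_inner_of_mem_proxSet hβ
    (fun s hs0 => by rw [norm20_smul hs0.ne']) (hs.weight_prox i hi)

theorem objective_add_le (hs : IsBCDStep Y τ π γ lam β W U V W' U' V') (hh : 1 ≤ h)
    (hV0 : V' 0 = V 0) (hτ : 0 ≤ τ) (hβ : 0 < β) (hγβ : 1 / β ≤ γ) :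
    bcdObjective Y τ π γ lam W' U' V' + π / 4 * ∑ i ∈ Finset.Icc 1 (h - 1), ‖V' i - V i‖ ^ 2 ≤
      bcdObjective Y τ π γ lam W U V := by
  obtain ⟨hTop, hWeight, hAct, hPreact⟩ := hs
  simp only [frobSq_eq_norm_sq] at hTop hAct hPreact
  have top := hTop (U h)
  have weight : ∑ i ∈ Finset.Icc 1 h,
        (lam * norm20 (W' i) + bcdPhi τ γ (U' i) (V (i - 1)) (W' i)) ≤
      ∑ i ∈ Finset.Icc 1 h, (lam * norm20 (W i) + bcdPhi τ γ (U' i) (V (i - 1)) (W i)) :=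
    Finset.sum_le_sum fun i hi => add_bcdPhi_le_of_mem_proxSet hτ hβ hγβ (hWeight i hi) (W i)
  have act : ∑ i ∈ Finset.Icc 2 h, (τ / 2 * ‖U' i - W' i * V' (i - 1)‖ ^ 2 +
        π / 2 * ‖V' (i - 1) - stepM (U (i - 1))‖ ^ 2 + π / 4 * ‖V' (i - 1) - V (i - 1)‖ ^ 2) ≤
      ∑ i ∈ Finset.Icc 2 h, (τ / 2 * ‖U' i - W' i * V (i - 1)‖ ^ 2 +
        π / 2 * ‖V (i - 1) - stepM (U (i - 1))‖ ^ 2) :=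
    Finset.sum_le_sum fun i hi => add_norm_sub_sq_le_of_forall_le hτ (hAct i hi) (V (i - 1))
  have preact : ∑ i ∈ Finset.Icc 1 (h - 1), (τ / 2 * ‖U' i - W i * V (i - 1)‖ ^ 2 +
        π / 2 * ‖V' i - stepM (U' i)‖ ^ 2) ≤
      ∑ i ∈ Finset.Icc 1 (h - 1), (τ / 2 * ‖U i - W i * V (i - 1)‖ ^ 2 +
        π / 2 * ‖V' i - stepM (U i)‖ ^ 2) :=
    Finset.sum_le_sum fun i hi => hPreact i hi (U i)
  have hV' : U' 1 - W' 1 * V' (1 - 1) = U' 1 - W' 1 * V (1 - 1) := by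
    change U' 1 - W' 1 * V' 0 = U' 1 - W' 1 * V 0
    rw [hV0]
  -- Split off the first and the last layer and shift the sums over activations, so that every
  -- sum in the objectives runs over the same range as in one of the four inequalities.
  have e1 := sum_Icc_one_eq_add_sum_Icc_two hh fun i => τ / 2 * ‖U' i - W' i * V' (i - 1)‖ ^ 2
  have e2 := sum_Icc_one_eq_add_sum_Icc_two hh fun i => τ / 2 * ‖U' i - W' i * V (i - 1)‖ ^ 2
  have e3 := sum_Icc_one_eq_sum_add hh fun i => τ / 2 * ‖U' i - W i * V (i - 1)‖ ^ 2
  have e4 := sum_Icc_one_eq_sum_add hh fun i => τ / 2 * ‖U i - W i * V (i - 1)‖ ^ 2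
  have r1 := sum_Icc_one_sub_one_eq h fun i => π / 2 * ‖V' i - stepM (U i)‖ ^ 2
  have r2 := sum_Icc_one_sub_one_eq h fun i => π / 2 * ‖V i - stepM (U i)‖ ^ 2
  have r3 := sum_Icc_one_sub_one_eq h fun i => π / 4 * ‖V' i - V i‖ ^ 2
  rw [hV'] at e1
  simp only [bcdPhi, Finset.sum_add_distrib] at weight act preact
  simp only [bcdObjective, frobSq_eq_norm_sq, Finset.mul_sum, Finset.sum_add_distrib]
  linarith

end IsBCDStep

theorem half_sum_norm_sub_stepM_sq_le_bcdObjective (hτ : 0 ≤ τ) (hγ : 0 ≤ γ) (hlam : 0 ≤ lam) :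
    π / 2 * ∑ i ∈ Finset.Icc 1 (h - 1), ‖V i - stepM (U i)‖ ^ 2 ≤
      bcdObjective Y τ π γ lam W U V := by
  have hW : 0 ≤ ∑ i ∈ Finset.Icc 1 h, (lam * norm20 (W i) + γ / 2 * ‖W i‖ ^ 2) :=
    Finset.sum_nonneg fun i _ => by
      have := norm20_nonneg (W i)
      positivity
  have hY : 0 ≤ 1 / (2 * (N : ℝ)) * ‖Y - hdmxM (U h)‖ ^ 2 := by positivity
  have hU : 0 ≤ τ / 2 * ∑ i ∈ Finset.Icc 1 h, ‖U i - W i * V (i - 1)‖ ^ 2 := by positivity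
  simp only [bcdObjective, frobSq_eq_norm_sq]
  linarith

theorem bcdObjective_nonneg (hτ : 0 ≤ τ) (hπ : 0 ≤ π) (hγ : 0 ≤ γ) (hlam : 0 ≤ lam) :
    0 ≤ bcdObjective Y τ π γ lam W U V :=
  le_trans (by positivity) (half_sum_norm_sub_stepM_sq_le_bcdObjective hτ hγ hlam)

theorem norm_act_le_of_bcdObjective_le (hτ : 0 ≤ τ) (hπ : 0 < π) (hγ : 0 ≤ γ)
    (hlam : 0 ≤ lam) {B : ℝ} (hB : bcdObjective Y τ π γ lam W U V ≤ B) {j : ℕ}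
    (hj : j ∈ Finset.Icc 1 (h - 1)) : ‖V j‖ ≤ √(2 * B / π) + √(d j * N) := by
  have hV : π / 2 * ‖V j - stepM (U j)‖ ^ 2 ≤ B :=
    calc _ ≤ π / 2 * ∑ i ∈ Finset.Icc 1 (h - 1), ‖V i - stepM (U i)‖ ^ 2 := by
          gcongr
          exact Finset.single_le_sum (fun i _ => sq_nonneg ‖V i - stepM (U i)‖) hj
      _ ≤ B := (half_sum_norm_sub_stepM_sq_le_bcdObjective hτ hγ hlam).trans hB
  refine (norm_le_norm_add_norm_sub' _ (stepM (U j))).trans ?_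
  rw [add_comm]
  gcongr
  · exact Real.le_sqrt_of_sq_le (by rw [le_div_iff₀ hπ]; linarith)
  · exact Real.le_sqrt_of_sq_le (norm_stepM_sq_le _)

section Iterates

variable {W : ℕ → (i : ℕ) → Matrix (Fin (d i)) (Fin (d (i - 1))) ℝ}
  {U V : ℕ → (i : ℕ) → Matrix (Fin (d i)) (Fin N) ℝ} {V0 : Matrix (Fin (d 0)) (Fin N) ℝ}

theorem bcdObjective_antitone_and_tendsto_act_sub
    (hstep : ∀ k, IsBCDStep Y τ π γ lam β (W k) (U k) (V k) (W (k + 1)) (U (k + 1)) (V (k + 1)))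
    (hh : 1 ≤ h) (hV0 : ∀ k, V k 0 = V0) (hτ : 0 ≤ τ) (hπ : 0 < π) (hγ : 0 ≤ γ)
    (hlam : 0 ≤ lam) (hβ : 0 < β) (hγβ : 1 / β ≤ γ) :
    (∀ k, bcdObjective Y τ π γ lam (W (k + 1)) (U (k + 1)) (V (k + 1)) ≤
      bcdObjective Y τ π γ lam (W k) (U k) (V k)) ∧
    (∃ a, Tendsto (fun k => bcdObjective Y τ π γ lam (W k) (U k) (V k)) atTop (𝓝 a)) ∧
    ∀ j ∈ Finset.Icc 1 (h - 1), Tendsto (fun k => V (k + 1) j - V k j) atTop (𝓝 0) := by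
  have hdesc k := (hstep k).objective_add_le hh ((hV0 (k + 1)).trans (hV0 k).symm) hτ hβ hγβ
  have hg k : 0 ≤ ∑ i ∈ Finset.Icc 1 (h - 1), ‖V (k + 1) i - V k i‖ ^ 2 := by positivity
  obtain ⟨hconv, hg0⟩ := tendsto_of_forall_add_mul_le (by positivity : 0 < π / 4)
    (fun k => bcdObjective_nonneg hτ hπ.le hγ hlam) hg hdesc
  refine ⟨fun k => by nlinarith [hdesc k, hg k], hconv, fun j hj => ?_⟩
  have hsq : Tendsto (fun k => ‖V (k + 1) j - V k j‖ ^ 2) atTop (𝓝 0) :=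
    squeeze_zero (fun k => by positivity)
      (fun k => Finset.single_le_sum (fun i _ => sq_nonneg ‖V (k + 1) i - V k i‖) hj) hg0
  refine tendsto_zero_iff_norm_tendsto_zero.2 ?_
  simpa [Real.sqrt_sq (norm_nonneg _)] using hsq.sqrt

theorem tendsto_weight_zero_of_isBCDStep
    (hstep : ∀ k, IsBCDStep Y τ π γ lam β (W k) (U k) (V k) (W (k + 1)) (U (k + 1)) (V (k + 1)))
    (hV0 : ∀ k, V k 0 = V0)
    (hmono : ∀ k, bcdObjective Y τ π γ lam (W (k + 1)) (U (k + 1)) (V (k + 1)) ≤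
      bcdObjective Y τ π γ lam (W k) (U k) (V k))
    (hΔV : ∀ j ∈ Finset.Icc 1 (h - 1), Tendsto (fun k => V (k + 1) j - V k j) atTop (𝓝 0))
    (hτ : 0 < τ) (hπ : 0 < π) (hγ : 0 < γ) (hlam : 0 ≤ lam) (hβ : 0 < β) {i : ℕ}
    (hi : i ∈ Finset.Icc 1 h) :
    Tendsto (fun k => W k i) atTop (𝓝 0) := by
  obtain ⟨C, hC, hΔ⟩ : ∃ C, (∀ k, ‖V k (i - 1)‖ ≤ C) ∧
      Tendsto (fun k => V (k + 1) (i - 1) - V k (i - 1)) atTop (𝓝 0) := by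
    obtain ⟨hi1, hih⟩ := Finset.mem_Icc.1 hi
    rcases hi1.eq_or_lt with rfl | hi1
    · refine ⟨‖V0‖, fun k => ?_, ?_⟩
      · change ‖V k 0‖ ≤ ‖V0‖
        rw [hV0]
      · change Tendsto (fun k => V (k + 1) 0 - V k 0) atTop (𝓝 0)
        simp [hV0]
    have hj : i - 1 ∈ Finset.Icc 1 (h - 1) := Finset.mem_Icc.2 ⟨by omega, by omega⟩
    have hF k : bcdObjective Y τ π γ lam (W k) (U k) (V k) ≤
        bcdObjective Y τ π γ lam (W 0) (U 0) (V 0) :=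
      antitone_nat_of_succ_le (f := fun k => bcdObjective Y τ π γ lam (W k) (U k) (V k))
        hmono (Nat.zero_le k)
    exact ⟨_, fun k => norm_act_le_of_bcdObjective_le hτ.le hπ hγ.le hlam (hF k) hj, hΔV _ hj⟩
  exact tendsto_zero_of_norm_sq_add_norm_mul_sq_eq_inner (W := fun k => W k i)
    (V := fun k => V k (i - 1)) (U := fun k => U k i) hγ hτ.le hC hΔ
    (fun k => (hstep k).norm_preact_le hτ hi)
    (fun k => (hstep k).norm_sq_add_norm_mul_sq_eq_inner hβ hi)

end Iterates

end BCD

end Frobenius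

theorem BCD_monotone_convergence_general
    (h N : ℕ) (hh : 1 ≤ h)
    (d : ℕ → ℕ)
    (Y : Matrix (Fin (d h)) (Fin N) ℝ) (V0 : Matrix (Fin (d 0)) (Fin N) ℝ)
    (τ π γ lam β : ℝ)
    (hτ : 0 < τ) (hπ : 0 < π) (hγ : 0 < γ) (hlam : 0 < lam) (hβ : 0 < β)
    (hγβ : γ ≥ 1 / β)
    (W : ℕ → (i : ℕ) → Matrix (Fin (d i)) (Fin (d (i - 1))) ℝ)
    (U : ℕ → (i : ℕ) → Matrix (Fin (d i)) (Fin N) ℝ)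
    (V : ℕ → (i : ℕ) → Matrix (Fin (d i)) (Fin N) ℝ)
    (hV0 : ∀ k, V k 0 = V0)
    (F : ((i : ℕ) → Matrix (Fin (d i)) (Fin (d (i - 1))) ℝ) →
      ((i : ℕ) → Matrix (Fin (d i)) (Fin N) ℝ) →
      ((i : ℕ) → Matrix (Fin (d i)) (Fin N) ℝ) → ℝ)
    (hF : F = fun Wf Uf Vf =>
      (1 / (2 * (N : ℝ))) * frobSq (Y - hdmxM (Uf h)) +
      (∑ i ∈ Finset.Icc 1 h, (lam * norm20 (Wf i) + (γ / 2) * frobSq (Wf i))) +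
      (τ / 2) * (∑ i ∈ Finset.Icc 1 h, frobSq (Uf i - Wf i * Vf (i - 1))) +
      (π / 2) * (∑ i ∈ Finset.Icc 1 (h - 1), frobSq (Vf i - stepM (Uf i))))
    -- (1): `U_h^{k+1}` globally minimizes its subproblem
    (hUh : ∀ k, ∀ Z : Matrix (Fin (d h)) (Fin N) ℝ,
      (τ / 2) * frobSq (U (k + 1) h - W k h * V k (h - 1)) +
          (1 / (2 * (N : ℝ))) * frobSq (Y - hdmxM (U (k + 1) h)) ≤
        (τ / 2) * frobSq (Z - W k h * V k (h - 1)) +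
          (1 / (2 * (N : ℝ))) * frobSq (Y - hdmxM Z))
    -- (2): `W_i^{k+1}` satisfies the proximal fixed-point inclusion, with
    -- `∇_W Φ(W; U, V) = τ(WV − U)Vᵀ + γW` for `Φ(W;U,V) = (τ/2)‖U−WV‖² + (γ/2)‖W‖²`
    (hWup : ∀ k, ∀ i ∈ Finset.Icc 1 h,
      W (k + 1) i ∈ ProxSet β (fun Z => lam * norm20 Z)
        (W (k + 1) i - β •
          (τ • ((W (k + 1) i * V k (i - 1) - U (k + 1) i) * (V k (i - 1))ᵀ) +
            γ • W (k + 1) i)))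
    -- (3): `V_i^{k+1}` globally minimizes its subproblem (indexed here by
    -- `i ∈ {2, …, h}`, i.e. the subproblem of `V_{i−1}^{k+1}` for `i−1 ∈ [h−1]`)
    (hVup : ∀ k, ∀ i ∈ Finset.Icc 2 h, ∀ Z : Matrix (Fin (d (i - 1))) (Fin N) ℝ,
      (τ / 2) * frobSq (U (k + 1) i - W (k + 1) i * V (k + 1) (i - 1)) +
          (π / 2) * frobSq (V (k + 1) (i - 1) - stepM (U k (i - 1))) ≤
        (τ / 2) * frobSq (U (k + 1) i - W (k + 1) i * Z) +
          (π / 2) * frobSq (Z - stepM (U k (i - 1))))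
    -- (4): `U_i^{k+1}` globally minimizes its subproblem
    (hUup : ∀ k, ∀ i ∈ Finset.Icc 1 (h - 1), ∀ Z : Matrix (Fin (d i)) (Fin N) ℝ,
      (τ / 2) * frobSq (U (k + 1) i - W k i * V k (i - 1)) +
          (π / 2) * frobSq (V (k + 1) i - stepM (U (k + 1) i)) ≤
        (τ / 2) * frobSq (Z - W k i * V k (i - 1)) +
          (π / 2) * frobSq (V (k + 1) i - stepM Z)) :
    (∀ k : ℕ,
      F (W (k + 1)) (U (k + 1)) (V (k + 1)) ≤ F (W k) (U k) (V k)) ∧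
    (∃ c : ℝ, Tendsto (fun k => F (W k) (U k) (V k)) atTop (𝓝 c)) ∧
    (∀ i ∈ Finset.Icc 1 h,
      Tendsto (fun k => W (k + 1) i - W k i) atTop
        (𝓝 (0 : Matrix (Fin (d i)) (Fin (d (i - 1))) ℝ))) ∧
    (∀ i ∈ Finset.Icc 1 (h - 1),
      Tendsto (fun k => V (k + 1) i - V k i) atTop
        (𝓝 (0 : Matrix (Fin (d i)) (Fin N) ℝ))) := by
  have hstep k : IsBCDStep Y τ π γ lam β (W k) (U k) (V k) (W (k + 1)) (U (k + 1)) (V (k + 1)) :=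
    ⟨hUh k, hWup k, hVup k, hUup k⟩
  subst hF
  obtain ⟨hmono, hconv, hΔV⟩ :=
    bcdObjective_antitone_and_tendsto_act_sub hstep hh hV0 hτ.le hπ hγ.le hlam.le hβ hγβ
  refine ⟨hmono, hconv, fun i hi => ?_, hΔV⟩
  have hW := tendsto_weight_zero_of_isBCDStep hstep hV0 hmono hΔV hτ hπ hγ hlam.le hβ hi
  simpa using (hW.comp (tendsto_add_atTop_nat 1)).sub hW

/-- BCD monotone convergence: if the BCD iterates satisfy the update
conditions (1)–(4) and `γ ≥ 1/β`, then the sequence of objective values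
`F(𝒲^k, 𝒰^k, 𝒱^k)` is non-increasing and converges, and the successive differences
`W_i^{k+1} − W_i^k` and `V_i^{k+1} − V_i^k` tend to `0`. -/
theorem BCD_monotone_convergence
    (h N : ℕ) (hh : 1 ≤ h) (hN : 1 ≤ N)
    (d : ℕ → ℕ) (hd : ∀ i, 1 ≤ d i)
    (Y : Matrix (Fin (d h)) (Fin N) ℝ) (V0 : Matrix (Fin (d 0)) (Fin N) ℝ)
    (τ π γ lam β : ℝ)
    (hτ : 0 < τ) (hπ : 0 < π) (hγ : 0 < γ) (hlam : 0 < lam) (hβ : 0 < β)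
    (hγβ : γ ≥ 1 / β)
    (W : ℕ → (i : ℕ) → Matrix (Fin (d i)) (Fin (d (i - 1))) ℝ)
    (U : ℕ → (i : ℕ) → Matrix (Fin (d i)) (Fin N) ℝ)
    (V : ℕ → (i : ℕ) → Matrix (Fin (d i)) (Fin N) ℝ)
    (hV0 : ∀ k, V k 0 = V0)
    (F : ((i : ℕ) → Matrix (Fin (d i)) (Fin (d (i - 1))) ℝ) →
      ((i : ℕ) → Matrix (Fin (d i)) (Fin N) ℝ) →
      ((i : ℕ) → Matrix (Fin (d i)) (Fin N) ℝ) → ℝ)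
    (hF : F = fun Wf Uf Vf =>
      (1 / (2 * (N : ℝ))) * frobSq (Y - hdmxM (Uf h)) +
      (∑ i ∈ Finset.Icc 1 h, (lam * norm20 (Wf i) + (γ / 2) * frobSq (Wf i))) +
      (τ / 2) * (∑ i ∈ Finset.Icc 1 h, frobSq (Uf i - Wf i * Vf (i - 1))) +
      (π / 2) * (∑ i ∈ Finset.Icc 1 (h - 1), frobSq (Vf i - stepM (Uf i))))
    -- (1): `U_h^{k+1}` globally minimizes its subproblem
    (hUh : ∀ k, ∀ Z : Matrix (Fin (d h)) (Fin N) ℝ,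
      (τ / 2) * frobSq (U (k + 1) h - W k h * V k (h - 1)) +
          (1 / (2 * (N : ℝ))) * frobSq (Y - hdmxM (U (k + 1) h)) ≤
        (τ / 2) * frobSq (Z - W k h * V k (h - 1)) +
          (1 / (2 * (N : ℝ))) * frobSq (Y - hdmxM Z))
    -- (2): `W_i^{k+1}` satisfies the proximal fixed-point inclusion, with
    -- `∇_W Φ(W; U, V) = τ(WV − U)Vᵀ + γW` for `Φ(W;U,V) = (τ/2)‖U−WV‖² + (γ/2)‖W‖²`
    (hWup : ∀ k, ∀ i ∈ Finset.Icc 1 h,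
      W (k + 1) i ∈ ProxSet β (fun Z => lam * norm20 Z)
        (W (k + 1) i - β •
          (τ • ((W (k + 1) i * V k (i - 1) - U (k + 1) i) * (V k (i - 1))ᵀ) +
            γ • W (k + 1) i)))
    -- (3): `V_i^{k+1}` globally minimizes its subproblem (indexed here by
    -- `i ∈ {2, …, h}`, i.e. the subproblem of `V_{i−1}^{k+1}` for `i−1 ∈ [h−1]`)
    (hVup : ∀ k, ∀ i ∈ Finset.Icc 2 h, ∀ Z : Matrix (Fin (d (i - 1))) (Fin N) ℝ,
      (τ / 2) * frobSq (U (k + 1) i - W (k + 1) i * V (k + 1) (i - 1)) +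
          (π / 2) * frobSq (V (k + 1) (i - 1) - stepM (U k (i - 1))) ≤
        (τ / 2) * frobSq (U (k + 1) i - W (k + 1) i * Z) +
          (π / 2) * frobSq (Z - stepM (U k (i - 1))))
    -- (4): `U_i^{k+1}` globally minimizes its subproblem
    (hUup : ∀ k, ∀ i ∈ Finset.Icc 1 (h - 1), ∀ Z : Matrix (Fin (d i)) (Fin N) ℝ,
      (τ / 2) * frobSq (U (k + 1) i - W k i * V k (i - 1)) +
          (π / 2) * frobSq (V (k + 1) i - stepM (U (k + 1) i)) ≤
        (τ / 2) * frobSq (Z - W k i * V k (i - 1)) +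
          (π / 2) * frobSq (V (k + 1) i - stepM Z)) :
    (∀ k : ℕ,
      F (W (k + 1)) (U (k + 1)) (V (k + 1)) ≤ F (W k) (U k) (V k)) ∧
    (∃ c : ℝ, Tendsto (fun k => F (W k) (U k) (V k)) atTop (𝓝 c)) ∧
    (∀ i ∈ Finset.Icc 1 h,
      Tendsto (fun k => W (k + 1) i - W k i) atTop
        (𝓝 (0 : Matrix (Fin (d i)) (Fin (d (i - 1))) ℝ))) ∧
    (∀ i ∈ Finset.Icc 1 (h - 1),
      Tendsto (fun k => V (k + 1) i - V k i) atTop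
        (𝓝 (0 : Matrix (Fin (d i)) (Fin N) ℝ))) :=
  BCD_monotone_convergence_general h N hh d Y V0 τ π γ lam β hτ hπ hγ hlam hβ hγβ W U V hV0 F hF hUh
    hWup hVup hUup
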